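/- The generating function ∑_P y_0^{(# white removed)} y_1^{(# black removed)}, summed over all partitions P of the row pyramid R_k, satisfies the recurrence G_k * G_{k-2} = y_0^k y_1^{k-1} + G_{k-1}^2 with G_0 = 1, G_1 = 1 + y_0. Hence G_k equals the k-th Kronecker F-polynomial F_k. -/

import Mathlib

open MvPolynomial

open scoped Classical in
/-- The generating function of partitions of the row pyramid `R_k`, weighting a partition
`(S_w, S_b)` by `y₀^{|S_w|} y₁^{|S_b|}`. -/
noncomputable def rowPartitionFunction (k : ℕ) : MvPolynomial (Fin 2) ℤ :=
  ∑ P ∈ ((Finset.Icc 1 k).powerset ×ˢ (Finset.Icc 1 (k - 1)).powerset).filter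
      (fun P => ∀ i ∈ P.2, i ∈ P.1 ∧ i + 1 ∈ P.1),
    X 0 ^ P.1.card * X 1 ^ P.2.card

/-! Splitting the partitions of `R_{k+1}` according to whether they contain the last white
stone `k + 1`, and then whether they contain the black stone `k` beneath it, gives
`G_{k+1} = G_k + L_{k+1}` and `L_{k+1} = y₀ (G_k + y₁ L_k)`, where `L_k` counts the partitions of
`R_k` containing the white stone `k`. Eliminating `L` yields the linear recurrence
`G_{k+2} = (1 + y₀ + y₀y₁) G_{k+1} - y₀y₁ G_k`, whose Casoratian `G_{k+2} G_k - G_{k+1}²` gets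
multiplied by `y₀y₁` at each step; this is the quadratic recurrence. As every `G_k` has constant
term `1`, the quadratic recurrence determines its solution from the first two terms. -/

open Finset

open scoped Classical in
noncomputable def rowPartitions (k : ℕ) : Finset (Finset ℕ × Finset ℕ) :=
  ((Icc 1 k).powerset ×ˢ (Icc 1 (k - 1)).powerset).filter
    (fun P => ∀ i ∈ P.2, i ∈ P.1 ∧ i + 1 ∈ P.1)

noncomputable def partitionWeight (P : Finset ℕ × Finset ℕ) : MvPolynomial (Fin 2) ℤ :=
  X 0 ^ P.1.card * X 1 ^ P.2.card

theorem rowPartitionFunction_eq_sum (k : ℕ) :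
    rowPartitionFunction k = ∑ P ∈ rowPartitions k, partitionWeight P := rfl

theorem mem_rowPartitions {k : ℕ} {P : Finset ℕ × Finset ℕ} :
    P ∈ rowPartitions k ↔ (∀ a ∈ P.1, 1 ≤ a ∧ a ≤ k) ∧ ∀ i ∈ P.2, i ∈ P.1 ∧ i + 1 ∈ P.1 := by
  simp only [rowPartitions, mem_filter, mem_product, mem_powerset, subset_iff, mem_Icc]
  constructor
  · exact fun ⟨⟨hA, _⟩, hB⟩ => ⟨hA, hB⟩
  · refine fun ⟨hA, hB⟩ => ⟨⟨hA, fun i hi => ?_⟩, hB⟩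
    have := hA _ (hB i hi).1
    have := hA _ (hB i hi).2
    omega

theorem filter_notMem_rowPartitions_succ (k : ℕ) :
    (rowPartitions (k + 1)).filter (fun P => k + 1 ∉ P.1) = rowPartitions k := by
  ext P
  simp only [mem_filter, mem_rowPartitions]
  grind

open scoped Classical in
noncomputable def lastStonePartitionFunction (k : ℕ) : MvPolynomial (Fin 2) ℤ :=
  ∑ P ∈ (rowPartitions k).filter (fun P => k ∈ P.1), partitionWeight P

theorem rowPartitionFunction_succ (k : ℕ) :
    rowPartitionFunction (k + 1) = rowPartitionFunction k + lastStonePartitionFunction (k + 1) := by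
  rw [rowPartitionFunction_eq_sum, rowPartitionFunction_eq_sum, lastStonePartitionFunction,
    ← sum_filter_not_add_sum_filter _ (fun P => k + 1 ∈ P.1), filter_notMem_rowPartitions_succ]

theorem partitionWeight_insert_fst {a : ℕ} {A B : Finset ℕ} (ha : a ∉ A) :
    partitionWeight (insert a A, B) = X 0 * partitionWeight (A, B) := by
  simp only [partitionWeight, card_insert_of_notMem ha]
  ring

theorem partitionWeight_insert_snd {b : ℕ} {A B : Finset ℕ} (hb : b ∉ B) :
    partitionWeight (A, insert b B) = X 1 * partitionWeight (A, B) := by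
  simp only [partitionWeight, card_insert_of_notMem hb]
  ring

theorem notMem_of_mem_rowPartitions {k : ℕ} {P : Finset ℕ × Finset ℕ} (hP : P ∈ rowPartitions k) :
    k + 1 ∉ P.1 ∧ k ∉ P.2 := by
  rw [mem_rowPartitions] at hP
  grind

open scoped Classical in
theorem sum_rowPartitions_succ_filter_mem_notMem (k : ℕ) :
    ∑ P ∈ (rowPartitions (k + 1)).filter (fun P => k + 1 ∈ P.1 ∧ k ∉ P.2), partitionWeight P =
      X 0 * rowPartitionFunction k := by
  rw [rowPartitionFunction_eq_sum, mul_sum]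
  refine (sum_nbij' (fun P => (insert (k + 1) P.1, P.2)) (fun P => (P.1.erase (k + 1), P.2))
    ?_ ?_ ?_ ?_ ?_).symm
  · intro P hP
    have := notMem_of_mem_rowPartitions hP
    simp only [mem_filter, mem_rowPartitions] at hP ⊢
    grind
  · intro P hP
    simp only [mem_filter, mem_rowPartitions] at hP ⊢
    grind
  · intro P hP
    simp [erase_insert (notMem_of_mem_rowPartitions hP).1]
  · intro P hP
    simp [insert_erase (mem_filter.1 hP).2.1]
  · intro P hP
    rw [partitionWeight_insert_fst (notMem_of_mem_rowPartitions hP).1]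

open scoped Classical in
theorem sum_rowPartitions_succ_filter_mem_mem (k : ℕ) :
    ∑ P ∈ (rowPartitions (k + 1)).filter (fun P => k + 1 ∈ P.1 ∧ k ∈ P.2), partitionWeight P =
      X 0 * X 1 * lastStonePartitionFunction k := by
  rw [lastStonePartitionFunction, mul_sum]
  refine (sum_nbij' (fun P => (insert (k + 1) P.1, insert k P.2))
    (fun P => (P.1.erase (k + 1), P.2.erase k)) ?_ ?_ ?_ ?_ ?_).symm
  · intro P hP
    have := notMem_of_mem_rowPartitions (mem_filter.1 hP).1
    simp only [mem_filter, mem_rowPartitions] at hP ⊢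
    grind
  · intro P hP
    simp only [mem_filter, mem_rowPartitions] at hP ⊢
    grind
  · intro P hP
    obtain ⟨hA, hB⟩ := notMem_of_mem_rowPartitions (mem_filter.1 hP).1
    simp [erase_insert hA, erase_insert hB]
  · intro P hP
    simp [insert_erase (mem_filter.1 hP).2.1, insert_erase (mem_filter.1 hP).2.2]
  · intro P hP
    obtain ⟨hA, hB⟩ := notMem_of_mem_rowPartitions (mem_filter.1 hP).1
    rw [partitionWeight_insert_fst hA, partitionWeight_insert_snd hB, mul_assoc]

theorem lastStonePartitionFunction_succ (k : ℕ) :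
    lastStonePartitionFunction (k + 1) =
      X 0 * (rowPartitionFunction k + X 1 * lastStonePartitionFunction k) := by
  rw [lastStonePartitionFunction, ← sum_filter_not_add_sum_filter _ (fun P => k ∈ P.2),
    filter_filter, filter_filter, sum_rowPartitions_succ_filter_mem_notMem,
    sum_rowPartitions_succ_filter_mem_mem]
  ring

theorem rowPartitions_zero : rowPartitions 0 = {(∅, ∅)} := by
  decide

theorem rowPartitionFunction_zero : rowPartitionFunction 0 = 1 := by
  simp [rowPartitionFunction_eq_sum, rowPartitions_zero, partitionWeight]

theorem lastStonePartitionFunction_zero : lastStonePartitionFunction 0 = 0 := by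
  simp [lastStonePartitionFunction, rowPartitions_zero, filter_singleton]

theorem rowPartitionFunction_one : rowPartitionFunction 1 = 1 + X 0 := by
  rw [rowPartitionFunction_succ, lastStonePartitionFunction_succ, rowPartitionFunction_zero,
    lastStonePartitionFunction_zero]
  ring

theorem rowPartitionFunction_add_two (k : ℕ) :
    rowPartitionFunction (k + 2) =
      (1 + X 0 + X 0 * X 1) * rowPartitionFunction (k + 1) - X 0 * X 1 * rowPartitionFunction k := by
  linear_combination rowPartitionFunction_succ (k + 1) + lastStonePartitionFunction_succ (k + 1)
    - X 0 * X 1 * rowPartitionFunction_succ k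

theorem constantCoeff_rowPartitionFunction (k : ℕ) : constantCoeff (rowPartitionFunction k) = 1 := by
  induction k with
  | zero => simp [rowPartitionFunction_zero]
  | succ k ih => simp [rowPartitionFunction_succ, lastStonePartitionFunction_succ, ih]

theorem rowPartitionFunction_ne_zero (k : ℕ) : rowPartitionFunction k ≠ 0 := fun h => by
  simpa [h] using constantCoeff_rowPartitionFunction k

theorem mul_sub_sq_of_linear_recurrence {R : Type*} [CommRing R] {u : ℕ → R} {c d : R}
    (hu : ∀ n, u (n + 2) = d * u (n + 1) - c * u n) (n : ℕ) :
    u (n + 2) * u n - u (n + 1) ^ 2 = c ^ n * (u 2 * u 0 - u 1 ^ 2) := by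
  induction n with
  | zero => ring
  | succ n ih =>
    linear_combination c * ih + u (n + 1) * hu (n + 1) - u (n + 2) * hu n

theorem eq_of_mul_recurrence {R : Type*} [MonoidWithZero R] [IsRightCancelMulZero R] [Add R]
    {u v : ℕ → R} (g : ℕ → R) (hv : ∀ n, v n ≠ 0)
    (hu_rec : ∀ n, u (n + 2) * u n = g n + u (n + 1) ^ 2)
    (hv_rec : ∀ n, v (n + 2) * v n = g n + v (n + 1) ^ 2)
    (h0 : u 0 = v 0) (h1 : u 1 = v 1) (n : ℕ) : u n = v n := by
  induction n using Nat.twoStepInduction with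
  | zero => exact h0
  | one => exact h1
  | more n ih0 ih1 =>
    refine mul_right_cancel₀ (hv n) ?_
    rw [hv_rec, ← ih0, ← ih1, hu_rec]

theorem rowPartitionFunction_mul_add_two (k : ℕ) :
    rowPartitionFunction (k + 2) * rowPartitionFunction k =
      X 0 ^ (k + 2) * X 1 ^ (k + 1) + rowPartitionFunction (k + 1) ^ 2 := by
  have h := mul_sub_sq_of_linear_recurrence rowPartitionFunction_add_two k
  rw [rowPartitionFunction_add_two 0, rowPartitionFunction_one, rowPartitionFunction_zero] at h
  linear_combination h

/-- The partition function `G_k` of the row pyramid `R_k` satisfies `G₀ = 1`,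
`G₁ = 1 + y₀`, and `G_k G_{k-2} = y₀^k y₁^{k-1} + G_{k-1}²`; hence it coincides with the
Kronecker F-polynomial `F_k` defined by the same recurrence. -/
theorem rowPartitionFunction_eq_kronecker_F :
    rowPartitionFunction 0 = 1 ∧
    rowPartitionFunction 1 = 1 + X 0 ∧
    (∀ k, 2 ≤ k →
      rowPartitionFunction k * rowPartitionFunction (k - 2) =
        X 0 ^ k * X 1 ^ (k - 1) + rowPartitionFunction (k - 1) ^ 2) ∧
    (∀ F : ℕ → MvPolynomial (Fin 2) ℤ,
      F 0 = 1 → F 1 = X 0 + 1 →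
      (∀ k, 2 ≤ k → F k * F (k - 2) = X 0 ^ k * X 1 ^ (k - 1) + F (k - 1) ^ 2) →
      ∀ k, F k = rowPartitionFunction k) := by
  refine ⟨rowPartitionFunction_zero, rowPartitionFunction_one, ?_, ?_⟩
  · intro k hk
    obtain ⟨n, rfl⟩ := Nat.exists_eq_add_of_le' hk
    simpa using rowPartitionFunction_mul_add_two n
  · intro F hF0 hF1 hF
    refine eq_of_mul_recurrence _ rowPartitionFunction_ne_zero (fun n => ?_)
      rowPartitionFunction_mul_add_two (by rw [hF0, rowPartitionFunction_zero])
      (by rw [hF1, rowPartitionFunction_one, add_comm])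
    simpa using hF (n + 2) le_add_self
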